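/- arXiv:2310.01737 — 2 statements merged into one kernel-verified Lean document; each statement's English description precedes it below -/
import Mathlib

section
/- Nonnegative advantage of the max⁺-following policy: for every 0 ≤ t < H and every s ∈ S, the max⁺-following policy π° satisfies A^{f⁺}_t(s, π°) ≥ 0, i.e. E_{a∼π^{k*(t,s)}_t(s)}[ r(s,a) + E_{s'∼P(s,a)}[ f⁺_{t+1}(s') ] ] ≥ f⁺_t(s). -/
open scoped BigOperators

/-- Expectation of a real-valued function under a probability mass function on a finite type. -/
noncomputable def pexp {α : Type*} [Fintype α] (p : PMF α) (f : α → ℝ) : ℝ :=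
  ∑ a, (p a).toReal * f a

section pexp

variable {α : Type*} [Fintype α] (p : PMF α)

lemma PMF.sum_toReal_eq_one : ∑ a, (p a).toReal = 1 := by
  rw [← ENNReal.toReal_sum fun a _ => p.apply_ne_top a, ← tsum_fintype (L := .unconditional _),
    p.tsum_coe, ENNReal.toReal_one]

lemma pexp_mono {f g : α → ℝ} (h : ∀ a, f a ≤ g a) : pexp p f ≤ pexp p g :=
  Finset.sum_le_sum fun a _ => mul_le_mul_of_nonneg_left (h a) ENNReal.toReal_nonneg

lemma pexp_sub_const (f : α → ℝ) (c : ℝ) : pexp p (fun a => f a - c) = pexp p f - c := by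
  simp only [pexp, mul_sub, Finset.sum_sub_distrib, ← Finset.sum_mul, p.sum_toReal_eq_one,
    one_mul]

end pexp

theorem maxplus_following_nonneg_advantage_general
    {S A : Type*} [Fintype S] [Fintype A]
    (P : S → A → PMF S) (r : S → A → ℝ)
    (H : ℕ)
    (K : ℕ)
    (πs : Fin K → ℕ → S → PMF A)
    (Vs : Fin K → ℕ → S → ℝ)
    (hVs : ∀ k t, t < H → ∀ s,
      Vs k t s = pexp (πs k t s) (fun a => r s a + pexp (P s a) (Vs k (t + 1))))
    (fplus : ℕ → S → ℝ)
    (hfplus : ∀ t s, fplus t s = ⨆ k : Fin K, Vs k t s)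
    (kstar : ℕ → S → Fin K)
    (hkstar : ∀ t s, Vs (kstar t s) t s = fplus t s) :
    ∀ t, t < H → ∀ s,
      0 ≤ pexp (πs (kstar t s) t s)
            (fun a => r s a + pexp (P s a) (fplus (t + 1)) - fplus t s) := by
  intro t ht s
  have hnext : ∀ s', Vs (kstar t s) (t + 1) s' ≤ fplus (t + 1) s' := fun s' => by
    rw [hfplus]
    exact le_ciSup (f := fun k => Vs k (t + 1) s') (Finite.bddAbove_range _) _
  rw [pexp_sub_const, sub_nonneg, ← hkstar, hVs _ _ ht]
  exact pexp_mono _ fun a => add_le_add_right (pexp_mono _ hnext) _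

/-- Nonnegative advantage of the max⁺-following policy: for every `0 ≤ t < H` and every
state `s`, the max⁺-following policy `π°` (which plays the action distribution of an
oracle `k*(t,s)` attaining the max value) satisfies `A^{f⁺}_t(s, π°) ≥ 0`. -/
theorem maxplus_following_nonneg_advantage
    {S A : Type*} [Fintype S] [Nonempty S] [Fintype A] [Nonempty A]
    (P : S → A → PMF S) (r : S → A → ℝ)
    (hr : ∀ s a, 0 ≤ r s a ∧ r s a ≤ 1)
    (H : ℕ)
    (K : ℕ) (hK : 1 ≤ K)
    (πs : Fin K → ℕ → S → PMF A)
    (Vs : Fin K → ℕ → S → ℝ)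
    (hVsH : ∀ k s, Vs k H s = 0)
    (hVs : ∀ k t, t < H → ∀ s,
      Vs k t s = pexp (πs k t s) (fun a => r s a + pexp (P s a) (Vs k (t + 1))))
    (fplus : ℕ → S → ℝ)
    (hfplus : ∀ t s, fplus t s = ⨆ k : Fin K, Vs k t s)
    (kstar : ℕ → S → Fin K)
    (hkstar : ∀ t s, Vs (kstar t s) t s = fplus t s) :
    ∀ t, t < H → ∀ s,
      0 ≤ pexp (πs (kstar t s) t s)
            (fun a => r s a + pexp (P s a) (fplus (t + 1)) - fplus t s) :=
  maxplus_following_nonneg_advantage_general P r H K πs Vs hVs fplus hfplus kstar hkstar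
end

section
/- Proposition 2 (performance lower bound, deterministic form): in the setting of the regret decomposition identity, max_{n∈[N]} E_{s∼d_0}[ V^{π_n}_0(s) ] ≥ E_{s∼d_0}[ f_0(s) ] + Δ_N − ε_N(Π) − Regret_N, where f is any time-indexed baseline with f_H ≡ 0, and Δ_N, ε_N(Π), Regret_N are defined from the losses ℓ_n(π) := −Σ_{t=0}^{H−1} E_{s∼d^{π_n}_t}[ A^f_t(s, π) ] as Δ_N := −(1/N) Σ_n ℓ_n(π⊕), ε_N(Π) := min_{π∈Π} (1/N) Σ_n ( ℓ_n(π) − ℓ_n(π⊕) ), Regret_N := (1/N) ( Σ_n ℓ_n(π_n) − min_{π∈Π} Σ_n ℓ_n(π) ). -/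
open scoped BigOperators

/-!
Against the baseline `V^{π_n}` itself the advantage of `π_n` has mean zero (Bellman equation),
and changing the baseline from `V` to `f` shifts the advantage by
`P(f_{t+1} - V_{t+1}) - (f_t - V_t)`. Hence the expected advantage of `π_n` at time `t` along its
own state distribution is `u(t+1) - u(t)` with `u(t) = E_{d_t}[f_t - V_t]`, which telescopes to
`ℓ_n(π_n) = E_{d₀}[f₀] - E_{d₀}[V^{π_n}_0]`. Since `ε_N(Π) ≥ (1/N)(min_π Σ_n ℓ_n(π) - Σ_n ℓ_n(π⊕))`,
the right-hand side is at most `E_{d₀}[f₀] - (1/N) Σ_n ℓ_n(π_n)`, the mean of the values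
`E_{d₀}[V^{π_n}_0]`, which is at most their maximum.
-/

open Finset

section Expectation

variable {α β : Type*} [Fintype α]

lemma pexp_const (p : PMF α) (c : ℝ) : pexp p (fun _ => c) = c := by
  have h : ∑ a, p a = 1 := by
    have := p.tsum_coe
    rwa [tsum_fintype] at this
  rw [pexp, ← sum_mul, ← ENNReal.toReal_sum fun a _ => p.apply_ne_top a, h,
    ENNReal.toReal_one, one_mul]

lemma pexp_add (p : PMF α) (g h : α → ℝ) :
    pexp p (fun a => g a + h a) = pexp p g + pexp p h := by
  simp only [pexp, mul_add, sum_add_distrib]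

lemma pexp_sub (p : PMF α) (g h : α → ℝ) :
    pexp p (fun a => g a - h a) = pexp p g - pexp p h := by
  simp only [pexp, mul_sub, sum_sub_distrib]

lemma pexp_bind [Fintype β] (p : PMF α) (q : α → PMF β) (g : β → ℝ) :
    pexp (p.bind q) g = pexp p (fun a => pexp (q a) g) := by
  have hmass : ∀ b, (∑ a, p a * q a b).toReal = ∑ a, (p a).toReal * (q a b).toReal := fun b => by
    rw [ENNReal.toReal_sum fun a _ => ENNReal.mul_ne_top (p.apply_ne_top a) ((q a).apply_ne_top b)]
    simp only [ENNReal.toReal_mul]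
  simp only [pexp, PMF.bind_apply, tsum_fintype, hmass, sum_mul, mul_sum, mul_assoc]
  exact sum_comm

end Expectation

section Advantage

variable {S A : Type*} [Fintype S] (P : S → A → PMF S) (r : S → A → ℝ)

noncomputable def advantage (f : ℕ → S → ℝ) (t : ℕ) (s : S) (a : A) : ℝ :=
  r s a + pexp (P s a) (f (t + 1)) - f t s

lemma advantage_eq_add (f g : ℕ → S → ℝ) (t : ℕ) (s : S) (a : A) :
    advantage P r f t s a = advantage P r g t s a
      + (pexp (P s a) (fun s' => f (t + 1) s' - g (t + 1) s') - (f t s - g t s)) := by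
  rw [advantage, advantage, pexp_sub]
  ring

lemma pexp_advantage_value_eq_zero [Fintype A] (π : S → PMF A) (V : ℕ → S → ℝ) (t : ℕ) (s : S)
    (hV : V t s = pexp (π s) (fun a => r s a + pexp (P s a) (V (t + 1)))) :
    pexp (π s) (advantage P r V t s) = 0 := by
  unfold advantage
  rw [pexp_sub, pexp_const, ← hV, sub_self]

lemma pexp_pexp_advantage_eq_sub [Fintype A] (π : S → PMF A) (f V : ℕ → S → ℝ) (t : ℕ)
    (hV : ∀ s, V t s = pexp (π s) (fun a => r s a + pexp (P s a) (V (t + 1)))) (d : PMF S) :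
    pexp d (fun s => pexp (π s) (advantage P r f t s))
      = pexp (d.bind fun s => (π s).bind fun a => P s a) (fun s => f (t + 1) s - V (t + 1) s)
        - pexp d (fun s => f t s - V t s) := by
  have hpoint : ∀ s, pexp (π s) (advantage P r f t s)
      = pexp (π s) (fun a => pexp (P s a) (fun s' => f (t + 1) s' - V (t + 1) s'))
        - (f t s - V t s) := fun s => by
    rw [funext (advantage_eq_add P r f V t s), pexp_add,
      pexp_advantage_value_eq_zero P r π V t s (hV s), zero_add, pexp_sub, pexp_const]
  simp only [hpoint, pexp_sub, pexp_bind]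

/-- The performance difference lemma. -/
theorem sum_pexp_advantage_eq [Fintype A] (π : ℕ → S → PMF A) (H : ℕ) (f V : ℕ → S → ℝ)
    (hfH : ∀ s, f H s = 0) (hVH : ∀ s, V H s = 0)
    (hV : ∀ t, t < H → ∀ s, V t s = pexp (π t s) (fun a => r s a + pexp (P s a) (V (t + 1))))
    (d : ℕ → PMF S) (hd : ∀ t, d (t + 1) = (d t).bind fun s => (π t s).bind fun a => P s a) :
    ∑ t ∈ range H, pexp (d t) (fun s => pexp (π t s) (advantage P r f t s))
      = pexp (d 0) (V 0) - pexp (d 0) (f 0) := by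
  have hstep : ∀ t ∈ range H, pexp (d t) (fun s => pexp (π t s) (advantage P r f t s))
      = pexp (d (t + 1)) (fun s => f (t + 1) s - V (t + 1) s)
        - pexp (d t) (fun s => f t s - V t s) := fun t ht => by
    rw [hd, pexp_pexp_advantage_eq_sub P r (π t) f V t (hV t (mem_range.mp ht))]
  rw [sum_congr rfl hstep, sum_range_sub (fun t => pexp (d t) (fun s => f t s - V t s))]
  simp only [hfH, hVH, sub_self, pexp_const, pexp_sub]
  ring

end Advantage

lemma one_div_card_mul_sum_le_ciSup {ι : Type*} [Fintype ι] [Nonempty ι] (x : ι → ℝ) :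
    1 / (Fintype.card ι : ℝ) * ∑ i, x i ≤ ⨆ i, x i := by
  have h := expect_le univ_nonempty fun i _ => le_ciSup (Set.finite_range x).bddAbove i
  rwa [Fintype.expect_eq_sum_div_card, ← one_div_mul_eq_div] at h

theorem performance_lower_bound_general
    {S A : Type*} [Fintype S] [Fintype A]
    (P : S → A → PMF S) (r : S → A → ℝ)
    (H : ℕ)
    (f : ℕ → S → ℝ)
    (hfH : ∀ s, f H s = 0)
    (πagg : ℕ → S → PMF A)
    (Pi : Finset (ℕ → S → PMF A)) (hne : Pi.Nonempty)
    (N : ℕ) (hN : 0 < N)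
    (πn : Fin N → ℕ → S → PMF A)
    (Vn : Fin N → ℕ → S → ℝ)
    (hVnH : ∀ n s, Vn n H s = 0)
    (hVn : ∀ n t, t < H → ∀ s,
      Vn n t s = pexp (πn n t s) (fun a => r s a + pexp (P s a) (Vn n (t + 1))))
    (d₀ : PMF S)
    (d : Fin N → ℕ → PMF S)
    (hd0 : ∀ n, d n 0 = d₀)
    (hd : ∀ n t, d n (t + 1) = (d n t).bind fun s => (πn n t s).bind fun a => P s a)
    (loss : Fin N → (ℕ → S → PMF A) → ℝ)
    (hloss : ∀ n π, loss n π =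
      -∑ t ∈ Finset.range H,
        pexp (d n t) (fun s =>
          pexp (π t s) (fun a => r s a + pexp (P s a) (f (t + 1)) - f t s))) :
    pexp d₀ (fun s => f 0 s)
        + (-(1 / (N : ℝ)) * ∑ n, loss n πagg)
        - Pi.inf' hne (fun π => (1 / (N : ℝ)) * ∑ n, (loss n π - loss n πagg))
        - (1 / (N : ℝ)) * ((∑ n, loss n (πn n)) - Pi.inf' hne (fun π => ∑ n, loss n π)) ≤
      ⨆ n : Fin N, pexp d₀ (fun s => Vn n 0 s) := by
  have hperf : ∀ n, loss n (πn n) = pexp d₀ (f 0) - pexp d₀ (Vn n 0) := fun n => by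
    rw [hloss, ← hd0 n, neg_eq_iff_eq_neg, neg_sub]
    exact sum_pexp_advantage_eq P r (πn n) H f (Vn n) hfH (hVnH n) (hVn n) (d n) (hd n)
  have hmean : 1 / (N : ℝ) * ∑ n, loss n (πn n)
      = pexp d₀ (f 0) - 1 / (N : ℝ) * ∑ n, pexp d₀ (Vn n 0) := by
    have hN' : (N : ℝ) ≠ 0 := by positivity
    simp only [hperf, sum_sub_distrib, sum_const, card_univ, Fintype.card_fin, nsmul_eq_mul]
    field_simp
  have hinf : 1 / (N : ℝ) * (Pi.inf' hne (fun π => ∑ n, loss n π) - ∑ n, loss n πagg)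
      ≤ Pi.inf' hne (fun π => 1 / (N : ℝ) * ∑ n, (loss n π - loss n πagg)) :=
    le_inf' _ _ fun π hπ => by
      rw [sum_sub_distrib]
      gcongr
      exact inf'_le _ hπ
  have : Nonempty (Fin N) := ⟨⟨0, hN⟩⟩
  have hmax := one_div_card_mul_sum_le_ciSup fun n => pexp d₀ (Vn n 0)
  rw [Fintype.card_fin] at hmax
  linarith

/-- Proposition 2 (performance lower bound, deterministic form): in the setting of the
regret decomposition identity,
`max_{n∈[N]} E_{s∼d₀}[ V^{π_n}_0(s) ] ≥ E_{s∼d₀}[ f_0(s) ] + Δ_N − ε_N(Π) − Regret_N`,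
where `ℓ_n(π) := −Σ_{t=0}^{H−1} E_{s∼d^{π_n}_t}[ A^f_t(s, π) ]`,
`Δ_N := −(1/N) Σ_n ℓ_n(π⊕)`, `ε_N(Π) := min_{π∈Π} (1/N) Σ_n (ℓ_n(π) − ℓ_n(π⊕))`, and
`Regret_N := (1/N)(Σ_n ℓ_n(π_n) − min_{π∈Π} Σ_n ℓ_n(π))`. -/
theorem performance_lower_bound
    {S A : Type*} [Fintype S] [Nonempty S] [Fintype A] [Nonempty A]
    (P : S → A → PMF S) (r : S → A → ℝ)
    (hr : ∀ s a, 0 ≤ r s a ∧ r s a ≤ 1)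
    (H : ℕ)
    (f : ℕ → S → ℝ)
    (hfH : ∀ s, f H s = 0)
    (πagg : ℕ → S → PMF A)
    (Pi : Finset (ℕ → S → PMF A)) (hne : Pi.Nonempty)
    (N : ℕ) (hN : 0 < N)
    (πn : Fin N → ℕ → S → PMF A)
    (Vn : Fin N → ℕ → S → ℝ)
    (hVnH : ∀ n s, Vn n H s = 0)
    (hVn : ∀ n t, t < H → ∀ s,
      Vn n t s = pexp (πn n t s) (fun a => r s a + pexp (P s a) (Vn n (t + 1))))
    (d₀ : PMF S)
    (d : Fin N → ℕ → PMF S)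
    (hd0 : ∀ n, d n 0 = d₀)
    (hd : ∀ n t, d n (t + 1) = (d n t).bind fun s => (πn n t s).bind fun a => P s a)
    (loss : Fin N → (ℕ → S → PMF A) → ℝ)
    (hloss : ∀ n π, loss n π =
      -∑ t ∈ Finset.range H,
        pexp (d n t) (fun s =>
          pexp (π t s) (fun a => r s a + pexp (P s a) (f (t + 1)) - f t s))) :
    pexp d₀ (fun s => f 0 s)
        + (-(1 / (N : ℝ)) * ∑ n, loss n πagg)
        - Pi.inf' hne (fun π => (1 / (N : ℝ)) * ∑ n, (loss n π - loss n πagg))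
        - (1 / (N : ℝ)) * ((∑ n, loss n (πn n)) - Pi.inf' hne (fun π => ∑ n, loss n π)) ≤
      ⨆ n : Fin N, pexp d₀ (fun s => Vn n 0 s) :=
  performance_lower_bound_general P r H f hfH πagg Pi hne N hN πn Vn hVnH hVn d₀ d hd0 hd loss hloss
end
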